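/- arXiv:2007.12690 — 4 statements merged into one kernel-verified Lean document; each statement's English description precedes it below -/
import Mathlib

section
/- A rooted labeled forest that avoids the pattern 123 avoids the pattern 2413 if and only if it is a P₁-forest. -/
/-- A rooted labeled forest on `[n]`: vertices are identified with their labels in `Fin n`
(`i : Fin n` representing the label `i+1`), each vertex has an optional parent, and the
parent relation is acyclic. Components are rooted at the vertices with no parent, and
children are unordered since only the parent function is recorded. -/
structure RForest (n : ℕ) where
  parent : Fin n → Option (Fin n)
  acyclic : ∀ v : Fin n, ¬ Relation.TransGen (fun a b => parent b = some a) v v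

namespace RForest

variable {n : ℕ}

/-- `u` is a strict ancestor of `v`. -/
def SAnc (F : RForest n) (u v : Fin n) : Prop :=
  Relation.TransGen (fun a b => F.parent b = some a) u v

/-- `u` is an ancestor of `v` (possibly `u = v`). -/
def Anc (F : RForest n) (u v : Fin n) : Prop :=
  F.SAnc u v ∨ u = v

/-- `F` is a tree: it has exactly one root, i.e. exactly one component. -/
def IsTree (F : RForest n) : Prop :=
  ∃! r : Fin n, F.parent r = none

end RForest

/-- A pattern of length `k` is a permutation of `[k]` (presented 0-indexed on `Fin k`). -/
abbrev Pattern (k : ℕ) := Equiv.Perm (Fin k)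

/-- The complement of a pattern: `π̄(i) = k + 1 - π(i)` in 1-indexed terms. -/
def Pattern.compl {k : ℕ} (π : Pattern k) : Pattern k :=
  π.trans ⟨Fin.rev, Fin.rev, Fin.rev_rev, Fin.rev_rev⟩

/-- `F` contains a (classical) instance of the pattern `π`: vertices `v 0, …, v (k-1)`,
each a strict ancestor of the next, whose labels are in the same relative order as `π`. -/
def ContainsPat {n k : ℕ} (F : RForest n) (π : Pattern k) : Prop :=
  ∃ v : Fin k → Fin n,
    (∀ i j : Fin k, i < j → F.SAnc (v i) (v j)) ∧
    (∀ i j : Fin k, v i < v j ↔ π i < π j)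

/-- `v` is a consecutive instance of `π` in `F`: a downward path (each vertex the parent of
the next) whose labels are in the same relative order as `π`. -/
def IsConsInstance {n k : ℕ} (F : RForest n) (π : Pattern k) (v : Fin k → Fin n) : Prop :=
  (∀ i j : Fin k, (j : ℕ) = (i : ℕ) + 1 → F.parent (v j) = some (v i)) ∧
  (∀ i j : Fin k, v i < v j ↔ π i < π j)

/-- `F` contains a consecutive instance of `π`. -/
def CContainsPat {n k : ℕ} (F : RForest n) (π : Pattern k) : Prop :=
  ∃ v, IsConsInstance F π v

/-- `F` avoids every pattern in the set `S` (of patterns of arbitrary lengths). -/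
def AvoidsSet {n : ℕ} (F : RForest n) (S : Set ((k : ℕ) × Pattern k)) : Prop :=
  ∀ p ∈ S, ¬ ContainsPat F p.2

/-- `f_n(S)`: the number of rooted labeled forests on `[n]` avoiding `S`. -/
noncomputable def fCount (S : Set ((k : ℕ) × Pattern k)) (n : ℕ) : ℕ :=
  Nat.card {F : RForest n // AvoidsSet F S}

/-- `t_n(S)`: the number of rooted labeled trees on `[n]` avoiding `S`. -/
noncomputable def tCount (S : Set ((k : ℕ) × Pattern k)) (n : ℕ) : ℕ :=
  Nat.card {F : RForest n // F.IsTree ∧ AvoidsSet F S}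

/-- The number of rooted labeled forests on `[n]` consecutively avoiding `π`. -/
noncomputable def cCount {k : ℕ} (π : Pattern k) (n : ℕ) : ℕ :=
  Nat.card {F : RForest n // ¬ CContainsPat F π}

/-- c-forest-Wilf equivalence of two patterns. -/
def CForestWilfEquiv {k k' : ℕ} (π : Pattern k) (π' : Pattern k') : Prop :=
  ∀ n : ℕ, cCount π n = cCount π' n

def p123 : Pattern 3 := 1
def p132 : Pattern 3 := ⟨![0, 2, 1], ![0, 2, 1], by intro x; fin_cases x <;> rfl, by intro x; fin_cases x <;> rfl⟩
def p213 : Pattern 3 := ⟨![1, 0, 2], ![1, 0, 2], by intro x; fin_cases x <;> rfl, by intro x; fin_cases x <;> rfl⟩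
def p231 : Pattern 3 := ⟨![1, 2, 0], ![2, 0, 1], by intro x; fin_cases x <;> rfl, by intro x; fin_cases x <;> rfl⟩
def p312 : Pattern 3 := ⟨![2, 0, 1], ![1, 2, 0], by intro x; fin_cases x <;> rfl, by intro x; fin_cases x <;> rfl⟩
def p321 : Pattern 3 := ⟨![2, 1, 0], ![2, 1, 0], by intro x; fin_cases x <;> rfl, by intro x; fin_cases x <;> rfl⟩
def p2413 : Pattern 4 := ⟨![1, 3, 0, 2], ![2, 0, 3, 1], by intro x; fin_cases x <;> rfl, by intro x; fin_cases x <;> rfl⟩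
def p2314 : Pattern 4 := ⟨![1, 2, 0, 3], ![2, 0, 1, 3], by intro x; fin_cases x <;> rfl, by intro x; fin_cases x <;> rfl⟩
def p3142 : Pattern 4 := ⟨![2, 0, 3, 1], ![1, 3, 0, 2], by intro x; fin_cases x <;> rfl, by intro x; fin_cases x <;> rfl⟩
def p3124 : Pattern 4 := ⟨![2, 0, 1, 3], ![1, 2, 0, 3], by intro x; fin_cases x <;> rfl, by intro x; fin_cases x <;> rfl⟩

/-- A top-down minimum: every ancestor has label at least `L(v)`. -/
def TDM {n : ℕ} (F : RForest n) (v : Fin n) : Prop :=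
  ∀ u : Fin n, F.Anc u v → v ≤ u

/-- A special vertex: a non-TDM vertex `v` such that the path from the root to `v`
contains `v₁, v₂, v₃, v₄ = v` in that order, with `v₁, v₃` TDM and `v₂, v₄` non-TDM. -/
def SpecialV {n : ℕ} (F : RForest n) (v : Fin n) : Prop :=
  ¬ TDM F v ∧ ∃ v₁ v₂ v₃ : Fin n, TDM F v₁ ∧ ¬ TDM F v₂ ∧ TDM F v₃ ∧
    F.Anc v₁ v₂ ∧ F.Anc v₂ v₃ ∧ F.Anc v₃ v

/-- `u` is an ancestor of `v` such that the path from `u` to `v` contains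
`v₁ = u, v₂, v₃, v₄ = v` in that order, with `v₁, v₃` TDM and `v₂, v₄` non-TDM. -/
def CeilCand {n : ℕ} (F : RForest n) (u v : Fin n) : Prop :=
  TDM F u ∧ ∃ v₂ v₃ : Fin n, ¬ TDM F v₂ ∧ TDM F v₃ ∧
    F.Anc u v₂ ∧ F.Anc v₂ v₃ ∧ F.Anc v₃ v

/-- `u` is the ceiling of the special vertex `v`: the lowest ancestor with the above
property (every other candidate is an ancestor of `u`). -/
def IsCeiling {n : ℕ} (F : RForest n) (u v : Fin n) : Prop :=
  CeilCand F u v ∧ ∀ u' : Fin n, CeilCand F u' v → F.Anc u' u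

/-- A `P₁`-forest: every special vertex `v` with ceiling `u` satisfies `L(u) > L(v)`. -/
def IsP1 {n : ℕ} (F : RForest n) : Prop :=
  ∀ v u : Fin n, SpecialV F v → IsCeiling F u v → v < u

/-- The segment of a vertex `v`: the TDM ancestors `u` of `v` with `L(u) < L(v)`. -/
def Segment {n : ℕ} (F : RForest n) (v : Fin n) : Set (Fin n) :=
  {u | TDM F u ∧ F.Anc u v ∧ u < v}

/-- `u` is the top of the segment of `v`: the element of the segment of least label. -/
def IsTopOf {n : ℕ} (F : RForest n) (u v : Fin n) : Prop :=
  u ∈ Segment F v ∧ ∀ w ∈ Segment F v, u ≤ w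

/-- A `P₂`-forest: whenever two comparable non-TDM vertices have intersecting segments,
the tops of their segments coincide. -/
def IsP2 {n : ℕ} (F : RForest n) : Prop :=
  ∀ v w : Fin n, ¬ TDM F v → ¬ TDM F w → (F.Anc v w ∨ F.Anc w v) →
    (Segment F v ∩ Segment F w).Nonempty →
    ∀ a b : Fin n, IsTopOf F a v → IsTopOf F b w → a = b

/-!
In a `123`-avoiding forest every vertex with a strict descendant of larger label is a top-down
minimum. So in an instance `a b c d` of `2413` the vertex `c` is a top-down minimum while `b` and
`d` are not: `d` is special, with a candidate ceiling of label at most `L(a) < L(d)`, and the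
ceiling, a top-down minimum lying below that candidate, has label at most that of the candidate,
violating `P₁`.
Conversely, let `u, v₂, v₃` witness that `u` is the ceiling of a special vertex `v`. The
minimum-label ancestor of `v₂` is a candidate too, hence an ancestor of `u`, which gives
`L(u) < L(v₂)`; also `L(v₃) < L(u)`. If `L(u) < L(v)`, then `123`-avoidance forces
`L(v) < L(v₂)`, and `u v₂ v₃ v` is an instance of `2413`.
-/

namespace RForest

variable {n : ℕ} {F : RForest n} {a b c : Fin n}

theorem anc_refl (v : Fin n) : F.Anc v v := Or.inr rfl

theorem SAnc.anc (h : F.SAnc a b) : F.Anc a b := Or.inl h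

theorem SAnc.trans (h₁ : F.SAnc a b) (h₂ : F.SAnc b c) : F.SAnc a c :=
  Relation.TransGen.trans h₁ h₂

theorem SAnc.ne (h : F.SAnc a b) : a ≠ b := fun he => F.acyclic a (he ▸ h)

theorem Anc.trans (h₁ : F.Anc a b) (h₂ : F.Anc b c) : F.Anc a c := by
  rcases h₁ with h₁ | rfl
  · rcases h₂ with h₂ | rfl
    exacts [Or.inl (h₁.trans h₂), Or.inl h₁]
  · exact h₂

theorem Anc.sAnc_of_ne (h : F.Anc a b) (hne : a ≠ b) : F.SAnc a b := h.resolve_right hne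

theorem anc_iff_reflTransGen :
    F.Anc a b ↔ Relation.ReflTransGen (fun x y => F.parent x = some y) b a := by
  rw [Relation.reflTransGen_swap, Relation.reflTransGen_iff_eq_or_transGen, Anc, SAnc, or_comm,
    eq_comm]

theorem anc_total_of_anc (ha : F.Anc a c) (hb : F.Anc b c) : F.Anc a b ∨ F.Anc b a := by
  simp only [anc_iff_reflTransGen] at ha hb ⊢
  exact Relation.ReflTransGen.total_of_right_unique
    (fun _ _ _ h₁ h₂ => Option.some_injective _ (h₁.symm.trans h₂)) hb ha

noncomputable def depth (F : RForest n) (v : Fin n) : ℕ := {w | F.SAnc w v}.ncard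

theorem SAnc.depth_lt (h : F.SAnc a b) : F.depth a < F.depth b := by
  refine Set.ncard_lt_ncard ?_ (Set.toFinite _)
  refine (Set.ssubset_iff_of_subset fun _ hw => SAnc.trans hw h).2 ?_
  exact ⟨a, h, F.acyclic a⟩

theorem sAnc_of_chain {k : ℕ} {v : Fin (k + 1) → Fin n}
    (hchain : ∀ i : Fin k, F.SAnc (v i.castSucc) (v i.succ)) (i j : Fin (k + 1)) (hij : i < j) :
    F.SAnc (v i) (v j) := by
  obtain ⟨j, hj⟩ := j
  induction j with
  | zero => exact absurd hij (Fin.not_lt_zero i)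
  | succ j ih =>
    have hstep : F.SAnc (v ⟨j, by omega⟩) (v ⟨j + 1, hj⟩) := hchain ⟨j, by omega⟩
    rcases Nat.lt_succ_iff_lt_or_eq.1 (Fin.lt_def.1 hij) with hlt | heq
    · exact (ih (by omega) hlt).trans hstep
    · rwa [show i = ⟨j, by omega⟩ from Fin.ext heq]

end RForest

open RForest

section Patterns

variable {n : ℕ} {F : RForest n} {a b c d : Fin n}

theorem containsPat_of_chain {k : ℕ} {π : Pattern (k + 1)} (v : Fin (k + 1) → Fin n)
    (hchain : ∀ i : Fin k, F.SAnc (v i.castSucc) (v i.succ)) (hmono : StrictMono (v ∘ π.symm)) :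
    ContainsPat F π :=
  ⟨v, F.sAnc_of_chain hchain, fun i j => by simpa using hmono.lt_iff_lt (a := π i) (b := π j)⟩

theorem containsPat_p123 (hab : F.SAnc a b) (hbc : F.SAnc b c) (hab' : a < b) (hbc' : b < c) :
    ContainsPat F p123 := by
  refine containsPat_of_chain ![a, b, c] (fun i => by fin_cases i; exacts [hab, hbc]) ?_
  refine Fin.strictMono_iff_lt_succ.2 fun i => ?_
  fin_cases i
  exacts [hab', hbc']

theorem containsPat_p2413 (hab : F.SAnc a b) (hbc : F.SAnc b c) (hcd : F.SAnc c d)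
    (hca : c < a) (had : a < d) (hdb : d < b) : ContainsPat F p2413 := by
  refine containsPat_of_chain ![a, b, c, d] (fun i => by fin_cases i; exacts [hab, hbc, hcd]) ?_
  refine Fin.strictMono_iff_lt_succ.2 fun i => ?_
  fin_cases i
  exacts [hca, had, hdb]

end Patterns

section TopDownMinima

variable {n : ℕ} {F : RForest n} {u v : Fin n}

theorem TDM.ne_of_not_tdm (hu : TDM F u) (hv : ¬ TDM F v) : u ≠ v := fun he => hv (he ▸ hu)

theorem not_tdm_iff : ¬ TDM F v ↔ ∃ u, F.Anc u v ∧ u < v := by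
  simp [TDM]

theorem exists_tdm_anc_forall_le (F : RForest n) (v : Fin n) :
    ∃ m, F.Anc m v ∧ TDM F m ∧ ∀ w, F.Anc w v → m ≤ w := by
  obtain ⟨m, hm, hmin⟩ :=
    Set.exists_min_image {w | F.Anc w v} id (Set.toFinite _) ⟨v, anc_refl v⟩
  exact ⟨m, hm, fun w hw => hmin w (hw.trans hm), hmin⟩

theorem tdm_of_sAnc_of_lt (h123 : ¬ ContainsPat F p123) (huv : F.SAnc u v) (hlt : u < v) :
    TDM F u := by
  rintro w (hw | rfl)
  · by_contra! hwu
    exact h123 (containsPat_p123 hw huv hwu hlt)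
  · exact le_rfl

end TopDownMinima

section Ceilings

variable {n : ℕ} {F : RForest n} {u v c v₂ v₃ : Fin n}

theorem CeilCand.anc (h : CeilCand F u v) : F.Anc u v := by
  obtain ⟨-, _, _, -, -, h₁, h₂, h₃⟩ := h
  exact h₁.trans (h₂.trans h₃)

theorem exists_isCeiling (h : CeilCand F u v) : ∃ c, IsCeiling F c v := by
  obtain ⟨c, hc, hmax⟩ :=
    Set.exists_max_image {u | CeilCand F u v} F.depth (Set.toFinite _) ⟨u, h⟩
  refine ⟨c, hc, fun u' hu' => ?_⟩
  rcases anc_total_of_anc hu'.anc hc.anc with h' | h' | rfl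
  · exact h'
  · exact absurd (hmax u' hu') h'.depth_lt.not_ge
  · exact anc_refl _

theorem IsCeiling.le_of_ceilCand (hc : IsCeiling F c v) (hu : CeilCand F u v) : c ≤ u :=
  hc.1.1 u (hc.2 u hu)

theorem IsCeiling.lt_of_not_tdm (hc : IsCeiling F c v) (h₂ : ¬ TDM F v₂) (h₃ : TDM F v₃)
    (h₂₃ : F.Anc v₂ v₃) (h₃v : F.Anc v₃ v) : c < v₂ := by
  obtain ⟨m, hm, hTm, hmin⟩ := exists_tdm_anc_forall_le F v₂
  obtain ⟨w, hw, hlt⟩ := not_tdm_iff.1 h₂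
  calc c ≤ m := hc.le_of_ceilCand ⟨hTm, v₂, v₃, h₂, h₃, hm, h₂₃, h₃v⟩
    _ ≤ w := hmin w hw
    _ < v₂ := hlt

end Ceilings

section P1

variable {n : ℕ} {F : RForest n}

theorem isP1_of_not_containsPat_p2413 (h123 : ¬ ContainsPat F p123)
    (h2413 : ¬ ContainsPat F p2413) : IsP1 F := by
  intro v u hv hu
  by_contra! hvu
  obtain ⟨hTu, v₂, v₃, h₂, h₃, hu₂, h₂₃, h₃v⟩ := hu.1
  have hu₂' : F.SAnc u v₂ := hu₂.sAnc_of_ne (hTu.ne_of_not_tdm h₂)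
  have h₂₃' : F.SAnc v₂ v₃ := h₂₃.sAnc_of_ne (h₃.ne_of_not_tdm h₂).symm
  have h₃v' : F.SAnc v₃ v := h₃v.sAnc_of_ne (h₃.ne_of_not_tdm hv.1)
  have hlt₃ : v₃ < u := (h₃ u (hu₂'.trans h₂₃').anc).lt_of_ne (hu₂'.trans h₂₃').ne.symm
  have hltv : u < v := hvu.lt_of_ne (hTu.ne_of_not_tdm hv.1)
  have hlt₂ : v < v₂ := by
    rcases lt_or_gt_of_ne (h₂₃'.trans h₃v').ne with h₂v | h₂v
    · exact absurd (tdm_of_sAnc_of_lt h123 (h₂₃'.trans h₃v') h₂v) h₂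
    · exact h₂v
  exact h2413 (containsPat_p2413 hu₂' h₂₃' h₃v' hlt₃ hltv hlt₂)

theorem not_containsPat_p2413_of_isP1 (h123 : ¬ ContainsPat F p123) (hP1 : IsP1 F) :
    ¬ ContainsPat F p2413 := by
  rintro ⟨x, hchain, horder⟩
  have hab : F.SAnc (x 0) (x 1) := hchain 0 1 (by decide)
  have hbc : F.SAnc (x 1) (x 2) := hchain 1 2 (by decide)
  have hcd : F.SAnc (x 2) (x 3) := hchain 2 3 (by decide)
  have hca : x 2 < x 0 := (horder 2 0).2 (by decide)
  have had : x 0 < x 3 := (horder 0 3).2 (by decide)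
  have hdb : x 3 < x 1 := (horder 3 1).2 (by decide)
  have hb : ¬ TDM F (x 1) := not_tdm_iff.2 ⟨x 0, hab.anc, had.trans hdb⟩
  have hd : ¬ TDM F (x 3) := not_tdm_iff.2 ⟨x 2, hcd.anc, hca.trans had⟩
  have hc : TDM F (x 2) := tdm_of_sAnc_of_lt h123 hcd (hca.trans had)
  obtain ⟨m, hm, hTm, hmin⟩ := exists_tdm_anc_forall_le F (x 0)
  have hcand : CeilCand F m (x 3) :=
    ⟨hTm, x 1, x 2, hb, hc, hm.trans hab.anc, hbc.anc, hcd.anc⟩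
  obtain ⟨u, hu⟩ := exists_isCeiling hcand
  have hdu : x 3 < u :=
    hP1 _ u ⟨hd, m, x 1, x 2, hTm, hb, hc, hm.trans hab.anc, hbc.anc, hcd.anc⟩ hu
  have hum : u ≤ m := hu.le_of_ceilCand hcand
  exact (hdu.trans_le (hum.trans (hmin _ (anc_refl _)))).not_gt had

end P1

/-- A `123`-avoiding forest avoids `2413` if and only if it is a `P₁`-forest. -/
theorem avoid123_avoid2413_iff_P1 {n : ℕ} (F : RForest n) (h : ¬ ContainsPat F p123) :
    ¬ ContainsPat F p2413 ↔ IsP1 F :=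
  ⟨isP1_of_not_containsPat_p2413 h, not_containsPat_p2413_of_isP1 h⟩
end

section
/- Let S be a set of patterns none of which begins with 1 (i.e., every π ∈ S has π(1) ≠ 1). Then t_{k+1}(S) ≥ f_k(S) for all k ≥ 0. -/
/-! Hang the forest below a new root carrying the smallest label and shift all other labels up
by one. This gives a tree, and distinct forests give distinct trees. An occurrence of a pattern
that meets the new root must start there (the root has no strict ancestor) and with the smallest
label, so the pattern begins with `1`; an occurrence avoiding the new root is one in the forest. -/

theorem not_transGen_of_eq_none {α : Type*} {p : α → Option α} {u v : α} (hv : p v = none) :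
    ¬ Relation.TransGen (fun a b => p b = some a) u v := by
  intro h
  obtain ⟨_, _, h⟩ := Relation.TransGen.tail'_iff.1 h
  simp [hv] at h

namespace RForest

variable {n : ℕ}

instance : Finite (RForest n) :=
  Finite.of_injective parent fun ⟨_, _⟩ ⟨_, _⟩ h => by cases h; rfl

/-- Parent function of `addRoot F`: the new root is `0`, and `i.succ` is the old vertex `i`. -/
def addRootParent (F : RForest n) : Fin (n + 1) → Option (Fin (n + 1)) :=
  Fin.cases none fun i => some ((F.parent i).elim 0 Fin.succ)

@[simp]
theorem addRootParent_zero (F : RForest n) : F.addRootParent 0 = none := rfl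

theorem addRootParent_succ_eq_succ_iff (F : RForest n) {a b : Fin n} :
    F.addRootParent b.succ = some a.succ ↔ F.parent b = some a := by
  cases h : F.parent b <;> simp [addRootParent, h, (Fin.succ_ne_zero a).symm]

theorem sAnc_of_addRootParent {F : RForest n} {a b : Fin n}
    (h : Relation.TransGen (fun u v => F.addRootParent v = some u) a.succ b.succ) :
    F.SAnc a b := by
  generalize hy : b.succ = y at h
  induction h generalizing b with
  | single h => subst hy; exact .single (F.addRootParent_succ_eq_succ_iff.1 h)
  | @tail c _ hxc hcy ih =>
    subst hy
    induction c using Fin.cases with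
    | zero => exact (not_transGen_of_eq_none F.addRootParent_zero hxc).elim
    | succ j => exact .tail (ih rfl) (F.addRootParent_succ_eq_succ_iff.1 hcy)

def addRoot (F : RForest n) : RForest (n + 1) where
  parent := F.addRootParent
  acyclic v hv := by
    induction v using Fin.cases with
    | zero => exact not_transGen_of_eq_none F.addRootParent_zero hv
    | succ i => exact F.acyclic i (sAnc_of_addRootParent hv)

theorem isTree_addRoot (F : RForest n) : F.addRoot.IsTree := by
  refine ⟨0, rfl, fun r hr => ?_⟩
  induction r using Fin.cases with
  | zero => rfl
  | succ i => cases h : F.parent i <;> simp [addRoot, addRootParent, h] at hr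

theorem addRoot_injective : Function.Injective (addRoot (n := n)) := by
  intro F G hFG
  have hext : F.addRootParent = G.addRootParent := congrArg parent hFG
  have hpar : F.parent = G.parent := funext fun i => Option.ext fun a => by
    rw [← addRootParent_succ_eq_succ_iff, ← addRootParent_succ_eq_succ_iff, hext]
  cases F; cases G; cases hpar; rfl

end RForest

theorem val_apply_eq_zero_of_lt_iff_lt {m n : ℕ} {π : Pattern m} {v : Fin m → Fin (n + 1)}
    (hv : ∀ i j, v i < v j ↔ π i < π j) {i : Fin m} (hi : v i = 0) : (π i : ℕ) = 0 := by
  by_contra hne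
  have hlt : π (π.symm ⟨0, i.pos⟩) < π i := by
    simpa [Fin.lt_def] using Nat.pos_of_ne_zero hne
  simpa [hi] using (hv _ i).2 hlt

theorem ContainsPat.of_addRoot {m n : ℕ} {F : RForest n} {π : Pattern m}
    (hπ : ∀ h0 : 0 < m, (π ⟨0, h0⟩ : ℕ) ≠ 0) (h : ContainsPat F.addRoot π) :
    ContainsPat F π := by
  obtain ⟨v, hanc, hord⟩ := h
  by_cases hz : ∀ i, v i ≠ 0
  · choose w hw using fun i => Fin.exists_succ_eq.2 (hz i)
    obtain rfl : v = Fin.succ ∘ w := funext fun i => (hw i).symm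
    exact ⟨w, fun i j hij => RForest.sAnc_of_addRootParent (hanc i j hij), fun i j => by
      simpa [Fin.succ_lt_succ_iff] using hord i j⟩
  · push Not at hz
    obtain ⟨i, hi⟩ := hz
    have hi0 : i = ⟨0, i.pos⟩ := by
      by_contra hne
      have hlt : (⟨0, i.pos⟩ : Fin m) < i :=
        Fin.lt_def.2 (Nat.pos_of_ne_zero fun h => hne (Fin.ext h))
      exact not_transGen_of_eq_none F.addRootParent_zero (hi ▸ hanc _ i hlt)
    rw [hi0] at hi
    exact (hπ i.pos (val_apply_eq_zero_of_lt_iff_lt hord hi)).elim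

theorem RForest.avoidsSet_addRoot {n : ℕ} {S : Set ((k : ℕ) × Pattern k)}
    (hS : ∀ p ∈ S, ∀ h0 : 0 < p.1, (p.2 ⟨0, h0⟩ : ℕ) ≠ 0) {F : RForest n} (hF : AvoidsSet F S) :
    AvoidsSet F.addRoot S :=
  fun p hp hcont => hF p hp (hcont.of_addRoot (hS p hp))

/-- If no pattern in `S` begins with `1`, then `t_{k+1}(S) ≥ f_k(S)` for all `k ≥ 0`. -/
theorem fCount_le_tCount_succ (S : Set ((k : ℕ) × Pattern k))
    (h : ∀ p ∈ S, ∀ h0 : 0 < p.1, (p.2 ⟨0, h0⟩ : ℕ) ≠ 0) :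
    ∀ k : ℕ, fCount S k ≤ tCount S (k + 1) := fun _ =>
  Nat.card_le_card_of_injective
    (fun F => ⟨F.1.addRoot, F.1.isTree_addRoot, RForest.avoidsSet_addRoot h F.2⟩)
    fun _ _ hFG => Subtype.ext (RForest.addRoot_injective (congrArg Subtype.val hFG))
end

section
/- Let S = {132, 231, 321}. Then t_n(S) = n! for every n ≥ 1, and the limit lim_{n→∞} f_n(S)^{1/n}/n exists and equals e^{−1}. -/
/-! A forest avoids 132, 231 and 321 exactly when every vertex whose parent is not a root has
a larger label than its parent: the three patterns are the orders of a 3-chain whose bottom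
label is below its middle one. Given the set `R` of `k` roots, parents can then be chosen
independently, the `j`-th smallest non-root having `k + j` choices, so `k.ascFactorial (n - k)`
forests have root set `R`. For `k = 1` this gives `t_n = n · (n-1)! = n!`. Summing over `R`,
`n! ≤ f_n = ∑ₖ C(n,k) · k.ascFactorial (n - k) ≤ n! · ∑ₖ (√n ^ k / k!)² ≤ n! · e^(2√n)`, and
Stirling's bounds `(n/e)ⁿ ≤ n! ≤ (n/e)ⁿ · e^√n` give the limit. -/

open Finset

section

variable {n : ℕ}

def IsIncreasingOffRoots (p : Fin n → Option (Fin n)) : Prop :=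
  ∀ v u, p v = some u → p u = none ∨ u < v

namespace IsIncreasingOffRoots

variable {p : Fin n → Option (Fin n)}

theorem of_transGen (hp : IsIncreasingOffRoots p) {a b : Fin n}
    (h : Relation.TransGen (fun a b => p b = some a) a b) :
    p b ≠ none ∧ (p a = none ∨ a < b) := by
  induction h with
  | single hab => exact ⟨by simp [hab], hp _ _ hab⟩
  | tail _ hbc ih =>
    refine ⟨by simp [hbc], ?_⟩
    rcases hp _ _ hbc with hb | hbc
    · exact absurd hb ih.1
    · exact ih.2.imp_right (·.trans hbc)

theorem acyclic (hp : IsIncreasingOffRoots p) (v : Fin n) :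
    ¬ Relation.TransGen (fun a b => p b = some a) v v := fun h => by
  obtain ⟨hv, hv' | hv'⟩ := hp.of_transGen h
  exacts [hv hv', lt_irrefl v hv']

end IsIncreasingOffRoots

def threePatterns : Set ((k : ℕ) × Pattern k) := {⟨3, p132⟩, ⟨3, p231⟩, ⟨3, p321⟩}

namespace RForest

theorem containsPat_of_sAnc {F : RForest n} {π : Pattern 3} {a b c : Fin n}
    (hab : F.SAnc a b) (hbc : F.SAnc b c) (hπ : ∀ i j, ![a, b, c] i < ![a, b, c] j ↔ π i < π j) :
    ContainsPat F π := by
  refine ⟨![a, b, c], fun i j hij => ?_, hπ⟩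
  fin_cases i <;> fin_cases j <;> simp at hij ⊢
  exacts [hab, hab.trans hbc, hbc]

theorem sAnc_ne {F : RForest n} {a b : Fin n} (h : F.SAnc a b) : a ≠ b := by
  rintro rfl; exact F.acyclic a h

theorem avoidsSet_threePatterns_iff (F : RForest n) :
    AvoidsSet F threePatterns ↔ IsIncreasingOffRoots F.parent := by
  constructor
  · intro hF v u hvu
    rcases hu : F.parent u with _ | w
    · exact Or.inl rfl
    refine Or.inr (lt_of_not_ge fun hle => ?_)
    have hwu : F.SAnc w u := .single hu
    have huv : F.SAnc u v := .single hvu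
    have hvu' : v < u := lt_of_le_of_ne hle (sAnc_ne huv).symm
    have hwv : w ≠ v := sAnc_ne (hwu.trans huv)
    have hwu' : w ≠ u := sAnc_ne hwu
    rcases lt_or_gt_of_ne hwv with hwv | hwv
    · refine hF ⟨3, p132⟩ (by simp [threePatterns]) (containsPat_of_sAnc hwu huv ?_)
      intro i j; fin_cases i <;> fin_cases j <;> simp [p132] <;> omega
    rcases lt_or_gt_of_ne hwu' with hwu' | hwu'
    · refine hF ⟨3, p231⟩ (by simp [threePatterns]) (containsPat_of_sAnc hwu huv ?_)
      intro i j; fin_cases i <;> fin_cases j <;> simp [p231] <;> omega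
    · refine hF ⟨3, p321⟩ (by simp [threePatterns]) (containsPat_of_sAnc hwu huv ?_)
      intro i j; fin_cases i <;> fin_cases j <;> simp [p321] <;> omega
  · intro hF p hp ⟨v, hchain, horder⟩
    have key : ∀ π : Pattern 3, p = ⟨3, π⟩ → π 2 < π 1 → False := by
      rintro π rfl hπ
      have hmid : F.parent (v 1) ≠ none :=
        (hF.of_transGen (hchain 0 1 (show (0 : Fin 3) < 1 by decide))).1
      have hlt := (hF.of_transGen (hchain 1 2 (show (1 : Fin 3) < 2 by decide))).2.resolve_left
        hmid
      exact hlt.not_gt ((horder 2 1).2 hπ)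
    rcases hp with h | h | h
    exacts [key p132 h (by decide), key p231 h (by decide), key p321 h (by decide)]

end RForest

theorem Finset.prod_add_card_filter_lt {α : Type*} [LinearOrder α] (k : ℕ) (T : Finset α) :
    ∏ v ∈ T, (k + #{u ∈ T | u < v}) = k.ascFactorial #T := by
  induction T using Finset.induction_on_max with
  | empty => simp
  | insert a T ha ih =>
    have haT : a ∉ T := fun h => lt_irrefl a (ha a h)
    rw [prod_insert haT, card_insert_of_notMem haT, Nat.ascFactorial_succ, ← ih]
    have hfilter_a : {u ∈ insert a T | u < a} = T := by
      ext u
      simp only [mem_filter, mem_insert]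
      exact ⟨fun ⟨h, hlt⟩ => h.resolve_left hlt.ne, fun hu => ⟨Or.inr hu, ha u hu⟩⟩
    rw [hfilter_a]
    congr 1
    refine prod_congr rfl fun v hv => ?_
    rw [filter_insert, if_neg (ha v hv).not_gt]

def rootSet (p : Fin n → Option (Fin n)) : Finset (Fin n) := {v | p v = none}

def allowedParents (R : Finset (Fin n)) (v : Fin n) : Finset (Option (Fin n)) :=
  if v ∈ R then {none} else (R ∪ Iio v).map .some

theorem mem_piFinset_allowedParents {R : Finset (Fin n)} {p : Fin n → Option (Fin n)} :
    p ∈ Fintype.piFinset (allowedParents R) ↔ IsIncreasingOffRoots p ∧ rootSet p = R := by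
  simp only [Fintype.mem_piFinset, allowedParents]
  constructor
  · intro hp
    have hroot : ∀ v, p v = none ↔ v ∈ R := fun v => by
      by_cases hv : v ∈ R
      · simpa [hv] using hp v
      · obtain ⟨u, -, hu⟩ := mem_map.1 (if_neg hv ▸ hp v)
        simp [hv, ← hu]
    refine ⟨fun v u hvu => ?_, by ext v; simp [rootSet, hroot]⟩
    have hv : v ∉ R := by simp [← hroot, hvu]
    have hu := hp v
    simp only [if_neg hv, hvu, mem_map, mem_union, mem_Iio, Function.Embedding.some_apply,
      Option.some.injEq, exists_eq_right] at hu
    exact hu.imp_left (hroot u).2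
  · rintro ⟨hp, rfl⟩ v
    split_ifs with hv
    · simpa [rootSet] using hv
    · rcases hpv : p v with _ | u
      · simp [rootSet, hpv] at hv
      · simpa [rootSet] using hp v u hpv

theorem card_allowedParents_of_notMem {R : Finset (Fin n)} {v : Fin n} (hv : v ∉ R) :
    #(allowedParents R v) = #R + #{u ∈ Rᶜ | u < v} := by
  have hsplit : R ∪ Iio v = R ∪ {u ∈ Rᶜ | u < v} := by ext u; simp; tauto
  rw [allowedParents, if_neg hv, card_map, hsplit, card_union_of_disjoint]
  exact disjoint_of_subset_right (filter_subset _ _) disjoint_compl_right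

theorem card_piFinset_allowedParents (R : Finset (Fin n)) :
    #(Fintype.piFinset (allowedParents R)) = (#R).ascFactorial (n - #R) := by
  rw [Fintype.card_piFinset, ← prod_mul_prod_compl R,
    prod_eq_one fun v hv => by simp [allowedParents, hv], one_mul,
    prod_congr rfl fun v hv => card_allowedParents_of_notMem (mem_compl.1 hv),
    prod_add_card_filter_lt, card_compl, Fintype.card_fin]

theorem card_filter_rootSet_eq [DecidablePred (IsIncreasingOffRoots (n := n))]
    (R : Finset (Fin n)) :
    #{p | IsIncreasingOffRoots p ∧ rootSet p = R} = (#R).ascFactorial (n - #R) := by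
  rw [← card_piFinset_allowedParents]
  congr 1
  ext p
  simp only [mem_filter, mem_univ, true_and, mem_piFinset_allowedParents]

namespace RForest

def equivIsIncreasingOffRoots (Q : (Fin n → Option (Fin n)) → Prop) :
    {F : RForest n // Q F.parent ∧ AvoidsSet F threePatterns} ≃
      {p // Q p ∧ IsIncreasingOffRoots p} where
  toFun F := ⟨F.1.parent, F.2.1, (avoidsSet_threePatterns_iff F.1).1 F.2.2⟩
  invFun p := ⟨⟨p.1, p.2.2.acyclic⟩, p.2.1, (avoidsSet_threePatterns_iff _).2 p.2.2⟩
  left_inv _ := rfl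
  right_inv _ := rfl

theorem card_avoiding_threePatterns (P : Finset (Fin n) → Prop) [DecidablePred P] :
    Nat.card {F : RForest n // P (rootSet F.parent) ∧ AvoidsSet F threePatterns} =
      ∑ R with P R, (#R).ascFactorial (n - #R) := by
  classical
  rw [Nat.card_congr (equivIsIncreasingOffRoots fun p => P (rootSet p)),
    Nat.card_eq_fintype_card, Fintype.card_subtype,
    card_eq_sum_card_fiberwise (f := rootSet) (t := {R | P R})
      fun p hp => mem_filter.2 ⟨mem_univ _, (mem_filter.1 hp).2.1⟩]
  refine sum_congr rfl fun R hR => ?_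
  rw [filter_filter, ← card_filter_rootSet_eq]
  congr 1
  ext p
  simp only [mem_filter, mem_univ, true_and]
  exact ⟨fun h => ⟨h.1.2, h.2⟩, fun h => ⟨⟨h.2 ▸ (mem_filter.1 hR).2, h.1⟩, h.2⟩⟩

theorem isTree_iff_card_rootSet (F : RForest n) : F.IsTree ↔ #(rootSet F.parent) = 1 := by
  simp [card_eq_one, IsTree, rootSet, eq_singleton_iff_unique_mem, ExistsUnique]

end RForest

open Nat in
theorem tCount_threePatterns (hn : 1 ≤ n) : tCount threePatterns n = n ! := by
  rw [tCount, Nat.card_congr (Equiv.subtypeEquivRight fun F =>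
      and_congr_left' (RForest.isTree_iff_card_rootSet F)),
    RForest.card_avoiding_threePatterns (#· = 1), ← powerset_univ, ← powersetCard_eq_filter,
    sum_congr rfl fun R hR => by rw [(mem_powersetCard.1 hR).2], sum_const, card_powersetCard,
    Finset.card_univ, Fintype.card_fin, choose_one_right, one_ascFactorial, smul_eq_mul,
    mul_factorial_pred (Nat.pos_iff_ne_zero.1 hn)]

theorem fCount_threePatterns (n : ℕ) :
    fCount threePatterns n = ∑ k ∈ range (n + 1), n.choose k * k.ascFactorial (n - k) := by
  rw [fCount,
    Nat.card_congr (Equiv.subtypeEquivRight fun _ => ⟨fun h => ⟨trivial, h⟩, And.right⟩),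
    RForest.card_avoiding_threePatterns fun _ => True, filter_true, ← powerset_univ,
    sum_powerset_apply_card fun k => k.ascFactorial (n - k)]
  simp only [Finset.card_univ, Fintype.card_fin, smul_eq_mul]

open Nat Real Filter Topology

theorem Nat.choose_mul_ascFactorial_mul_sq_factorial_le {n k : ℕ} (hk : k ≤ n) :
    n.choose k * k.ascFactorial (n - k) * k ! ^ 2 ≤ n ^ k * n ! :=
  calc n.choose k * k.ascFactorial (n - k) * k ! ^ 2
      = n.descFactorial k * (k ! * k.ascFactorial (n - k)) := by
        rw [descFactorial_eq_factorial_mul_choose]; ring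
    _ ≤ n ^ k * (k ! * (k + 1).ascFactorial (n - k)) := by
        gcongr
        exacts [descFactorial_le_pow n k, le_succ k]
    _ = n ^ k * n ! := by rw [factorial_mul_ascFactorial, Nat.add_sub_cancel' hk]

theorem factorial_le_fCount_threePatterns (hn : 1 ≤ n) : n ! ≤ fCount threePatterns n := by
  rw [fCount_threePatterns]
  calc n ! = n.choose 1 * (1 : ℕ).ascFactorial (n - 1) := by
        rw [choose_one_right, one_ascFactorial, mul_factorial_pred (Nat.pos_iff_ne_zero.1 hn)]
    _ ≤ _ := single_le_sum (f := fun k => n.choose k * k.ascFactorial (n - k))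
        (fun _ _ => Nat.zero_le _) (mem_range.2 (by omega))

theorem fCount_threePatterns_le (n : ℕ) :
    (fCount threePatterns n : ℝ) ≤ n ! * exp √n ^ 2 := by
  have hterm : ∀ k ∈ range (n + 1),
      ((n.choose k * k.ascFactorial (n - k) : ℕ) : ℝ) ≤ n ! * (√n ^ k / k !) ^ 2 := by
    intro k hk
    have hle : ((n.choose k * k.ascFactorial (n - k) * k ! ^ 2 : ℕ) : ℝ) ≤ (n ^ k * n ! : ℕ) :=
      Nat.cast_le.2 <| choose_mul_ascFactorial_mul_sq_factorial_le <|
        Nat.lt_succ_iff.1 (mem_range.1 hk)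
    rw [div_pow, ← pow_mul, mul_comm k 2, pow_mul, sq_sqrt n.cast_nonneg, mul_div_assoc',
      le_div_iff₀ (by positivity)]
    push_cast at hle ⊢
    linarith
  calc (fCount threePatterns n : ℝ)
      ≤ ∑ k ∈ range (n + 1), (n ! : ℝ) * (√n ^ k / k !) ^ 2 := by
        rw [fCount_threePatterns]; push_cast; exact sum_le_sum (by exact_mod_cast hterm)
    _ = n ! * ∑ k ∈ range (n + 1), (√n ^ k / k !) ^ 2 := (mul_sum ..).symm
    _ ≤ n ! * (∑ k ∈ range (n + 1), √n ^ k / k !) ^ 2 := by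
        gcongr
        exact sum_sq_le_sq_sum_of_nonneg fun _ _ => by positivity
    _ ≤ n ! * exp √n ^ 2 := by
        gcongr
        exact sum_le_exp_of_nonneg (sqrt_nonneg _) _

theorem pow_div_exp_one_le_factorial (n : ℕ) : ((n : ℝ) / exp 1) ^ n ≤ n ! := by
  have h := pow_div_factorial_le_exp (x := (n : ℝ)) n.cast_nonneg n
  rw [div_le_iff₀ (by positivity), ← exp_one_rpow, rpow_natCast] at h
  rw [div_pow, div_le_iff₀ (by positivity)]
  linarith

theorem factorial_le_pow_div_exp_one_mul_exp_sqrt (n : ℕ) :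
    (n ! : ℝ) ≤ ((n : ℝ) / exp 1) ^ n * exp √n := by
  rcases eq_or_ne n 0 with rfl | hn
  · simp
  have hstirling : Stirling.stirlingSeq n ≤ exp 1 / √2 := by
    obtain ⟨m, rfl⟩ := Nat.exists_eq_succ_of_ne_zero hn
    exact Stirling.stirlingSeq_one ▸ Stirling.stirlingSeq'_antitone (Nat.zero_le m)
  have hn' : (n : ℝ) ≠ 0 := Nat.cast_ne_zero.2 hn
  calc (n ! : ℝ) = Stirling.stirlingSeq n * (√2 * √n) * ((n : ℝ) / exp 1) ^ n := by
        rw [Stirling.stirlingSeq, ← sqrt_mul zero_le_two]; field_simp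
    _ ≤ exp 1 / √2 * (√2 * √n) * ((n : ℝ) / exp 1) ^ n := by gcongr
    _ = ((n : ℝ) / exp 1) ^ n * (exp 1 * √n) := by field_simp
    _ ≤ ((n : ℝ) / exp 1) ^ n * exp √n := by gcongr; exact exp_one_mul_le_exp

theorem tendsto_rpow_inv_div_of_le_of_le {u g : ℕ → ℝ}
    (hg : Tendsto (fun n : ℕ => g n / n) atTop (𝓝 0))
    (hlow : ∀ᶠ n : ℕ in atTop, ((n : ℝ) / exp 1) ^ n ≤ u n)
    (hup : ∀ᶠ n : ℕ in atTop, u n ≤ ((n : ℝ) / exp 1) ^ n * exp (g n)) :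
    Tendsto (fun n : ℕ => u n ^ (n : ℝ)⁻¹ / n) atTop (𝓝 (exp (-1))) := by
  have hupper : Tendsto (fun n : ℕ => exp (-1) * exp (g n / n)) atTop (𝓝 (exp (-1))) := by
    simpa using ((continuous_exp.tendsto 0).comp hg).const_mul (exp (-1))
  refine tendsto_of_tendsto_of_tendsto_of_le_of_le' tendsto_const_nhds hupper ?_ ?_
  · filter_upwards [hlow, eventually_ne_atTop 0] with n hlo hn
    calc exp (-1) = (((n : ℝ) / exp 1) ^ n) ^ (n : ℝ)⁻¹ / n := by
          rw [pow_rpow_inv_natCast (by positivity) hn, exp_neg]; field_simp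
      _ ≤ u n ^ (n : ℝ)⁻¹ / n := by gcongr
  · filter_upwards [hlow, hup, eventually_ne_atTop 0] with n hlo hup hn
    calc u n ^ (n : ℝ)⁻¹ / n ≤ (((n : ℝ) / exp 1) ^ n * exp (g n)) ^ (n : ℝ)⁻¹ / n := by
          gcongr; exact (by positivity : (0 : ℝ) ≤ _).trans hlo
      _ = exp (-1) * exp (g n / n) := by
          rw [mul_rpow (by positivity) (exp_pos _).le, pow_rpow_inv_natCast (by positivity) hn,
            ← exp_mul, exp_neg]
          field_simp

theorem tendsto_fCount_threePatterns :
    Tendsto (fun n : ℕ => (fCount threePatterns n : ℝ) ^ (n : ℝ)⁻¹ / n) atTop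
      (𝓝 (exp (-1))) := by
  refine tendsto_rpow_inv_div_of_le_of_le (g := fun n => 3 * √n) ?_ ?_ (.of_forall fun n => ?_)
  · have h := (tendsto_inv_atTop_zero.comp
      (tendsto_sqrt_atTop.comp tendsto_natCast_atTop_atTop)).const_mul (3 : ℝ)
    rw [mul_zero] at h
    refine h.congr fun n => ?_
    simp only [Function.comp_apply, mul_div_assoc, sqrt_div_self', one_div]
  · filter_upwards [eventually_ge_atTop 1] with n hn
    exact (pow_div_exp_one_le_factorial n).trans
      (by exact_mod_cast factorial_le_fCount_threePatterns hn)
  · calc (fCount threePatterns n : ℝ) ≤ n ! * exp √n ^ 2 := fCount_threePatterns_le n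
      _ ≤ ((n : ℝ) / exp 1) ^ n * exp √n * exp √n ^ 2 := by
          gcongr; exact factorial_le_pow_div_exp_one_mul_exp_sqrt n
      _ = ((n : ℝ) / exp 1) ^ n * exp (3 * √n) := by
          rw [mul_assoc, sq, ← exp_add, ← exp_add]; ring_nf

end

/-- For `S = {132, 231, 321}`: `t_n(S) = n!` for every `n ≥ 1`, and
`lim f_n(S)^{1/n}/n = e⁻¹`. -/
theorem tCount_132_231_321_eq_factorial_and_limit :
    (∀ n : ℕ, 1 ≤ n →
      tCount ({⟨3, p132⟩, ⟨3, p231⟩, ⟨3, p321⟩} : Set ((k : ℕ) × Pattern k)) n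
        = n.factorial) ∧
    Filter.Tendsto
      (fun n : ℕ =>
        (fCount ({⟨3, p132⟩, ⟨3, p231⟩, ⟨3, p321⟩} : Set ((k : ℕ) × Pattern k)) n : ℝ)
          ^ ((n : ℝ)⁻¹) / (n : ℝ))
      Filter.atTop (nhds (Real.exp (-1))) :=
  ⟨fun _ => tCount_threePatterns, tendsto_fCount_threePatterns⟩
end

section
/- For every real number c with 0 < c < 1, there exists a positive integer k such that for all sufficiently large n, the number of permutations σ of [n] = {1,…,n} that avoid the consecutive pattern 1 2 ⋯ k — that is, for which there is no index i with 1 ≤ i ≤ n − k + 1 such that σ(i) < σ(i+1) < ⋯ < σ(i+k−1) — is at least c^n · n!. -/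
/-- `σ` avoids the consecutive pattern `1 2 ⋯ k`: there is no index `i` such that the
`k` consecutive values `σ(i), σ(i+1), …, σ(i+k-1)` are increasing. -/
def AvoidsConsIncreasing (n k : ℕ) (σ : Equiv.Perm (Fin n)) : Prop :=
  ¬ ∃ i : ℕ, ∃ h : i + k ≤ n, ∀ j : ℕ, ∀ hj : j + 1 < k,
      σ ⟨i + j, by omega⟩ < σ ⟨i + j + 1, by omega⟩

/-!
Choose `m ≥ 2` with `c ^ m ≤ 1 / 2`. A permutation with a descent at every position `j` with
`m ∣ j + 1` avoids `1 2 ⋯ (m + 1)`, because every window of `m + 1` consecutive positions contains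
such a pair `j, j + 1`. These pairs are disjoint, so exchanging the two values of `τ` on each pair
where `τ` ascends sends every permutation to one with all these descents, and `τ` is recovered from
the image together with the set of exchanged pairs. There are at most `2 ^ (n / m)` such sets,
so at least `n! / 2 ^ (n / m) ≥ c ^ n * n!` permutations avoid the pattern.
-/

open Finset Function Equiv

/-- Swaps `x` and `x + 1` for every marked `x`. -/
def pairSwap (b : ℕ → Prop) [DecidablePred b] (x : ℕ) : ℕ :=
  if b x then x + 1 else if x ≠ 0 ∧ b (x - 1) then x - 1 else x

section PairSwap

variable {b : ℕ → Prop} [DecidablePred b] {x : ℕ}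

theorem pairSwap_of_mark (h : b x) : pairSwap b x = x + 1 := if_pos h

theorem pairSwap_succ_of_mark (hb : ∀ j, b j → ¬ b (j + 1)) (h : b x) :
    pairSwap b (x + 1) = x := by
  simp [pairSwap, hb x h, h]

theorem pairSwap_of_not_mark (h : ¬ b x) (h' : ∀ y, y + 1 = x → ¬ b y) :
    pairSwap b x = x := by
  have : ¬ (x ≠ 0 ∧ b (x - 1)) := fun ⟨hx, hb⟩ => h' (x - 1) (by omega) hb
  simp [pairSwap, h, this]

theorem pairSwap_involutive (hb : ∀ j, b j → ¬ b (j + 1)) : Involutive (pairSwap b) := by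
  intro x
  by_cases hx : b x
  · rw [pairSwap_of_mark hx, pairSwap_succ_of_mark hb hx]
  by_cases hpred : ∃ y, y + 1 = x ∧ b y
  · obtain ⟨y, rfl, hy⟩ := hpred
    rw [pairSwap_succ_of_mark hb hy, pairSwap_of_mark hy]
  · have hfix : ∀ y, y + 1 = x → ¬ b y := fun y hy hby => hpred ⟨y, hy, hby⟩
    rw [pairSwap_of_not_mark hx hfix, pairSwap_of_not_mark hx hfix]

theorem pairSwap_lt {n : ℕ} (hn : ∀ j, b j → j + 1 < n) (hx : x < n) : pairSwap b x < n := by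
  unfold pairSwap
  split_ifs with h <;> grind

end PairSwap

def finPairSwap {n : ℕ} (b : ℕ → Prop) [DecidablePred b] (hb : ∀ j, b j → ¬ b (j + 1))
    (hn : ∀ j, b j → j + 1 < n) : Perm (Fin n) :=
  Involutive.toPerm (fun x => ⟨pairSwap b x, pairSwap_lt hn x.2⟩)
    fun x => Fin.ext (pairSwap_involutive hb x)

variable {n : ℕ} {p : ℕ → Prop}

def DescentsOn (p : ℕ → Prop) (σ : Perm (Fin n)) : Prop :=
  ∀ j (h : j + 1 < n), p j → σ ⟨j + 1, h⟩ < σ ⟨j, by omega⟩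

def IsAscentOn (p : ℕ → Prop) (τ : Perm (Fin n)) (j : ℕ) : Prop :=
  p j ∧ ∃ h : j + 1 < n, τ ⟨j, by omega⟩ < τ ⟨j + 1, h⟩

theorem isAscentOn_succ_lt (τ : Perm (Fin n)) : ∀ j, IsAscentOn p τ j → j + 1 < n :=
  fun _ h => h.2.1

theorem isAscentOn_not_succ (hp : ∀ j, p j → ¬ p (j + 1)) (τ : Perm (Fin n)) :
    ∀ j, IsAscentOn p τ j → ¬ IsAscentOn p τ (j + 1) :=
  fun j h h' => hp j h.1 h'.1

variable [DecidablePred p]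

instance (τ : Perm (Fin n)) : DecidablePred (IsAscentOn p τ) :=
  fun _ => inferInstanceAs (Decidable (_ ∧ _))

def descentNormalize (hp : ∀ j, p j → ¬ p (j + 1)) (τ : Perm (Fin n)) : Perm (Fin n) :=
  (finPairSwap (IsAscentOn p τ) (isAscentOn_not_succ hp τ) (isAscentOn_succ_lt τ)).trans τ

theorem descentNormalize_apply (hp : ∀ j, p j → ¬ p (j + 1)) (τ : Perm (Fin n)) (x : Fin n) :
    descentNormalize hp τ x =
      τ ⟨pairSwap (IsAscentOn p τ) x, pairSwap_lt (isAscentOn_succ_lt τ) x.2⟩ :=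
  rfl

theorem descentsOn_descentNormalize (hp : ∀ j, p j → ¬ p (j + 1)) (τ : Perm (Fin n)) :
    DescentsOn p (descentNormalize hp τ) := by
  intro j hj hpj
  rw [descentNormalize_apply, descentNormalize_apply]
  by_cases hasc : IsAscentOn p τ j
  · simp only [pairSwap_of_mark hasc, pairSwap_succ_of_mark (isAscentOn_not_succ hp τ) hasc]
    exact hasc.2.2
  · have hj0 : pairSwap (IsAscentOn p τ) j = j :=
      pairSwap_of_not_mark hasc fun y hy h => hp y h.1 (hy ▸ hpj)
    have hj1 : pairSwap (IsAscentOn p τ) (j + 1) = j + 1 :=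
      pairSwap_of_not_mark (fun h => hp j hpj h.1) fun y hy => by
        obtain rfl : y = j := by omega
        exact hasc
    simp only [hj0, hj1]
    refine lt_of_le_of_ne (not_lt.1 fun h => hasc ⟨hpj, hj, h⟩) ?_
    exact τ.injective.ne (by simp [Fin.ext_iff])

theorem eq_of_descentNormalize_eq (hp : ∀ j, p j → ¬ p (j + 1)) {τ τ' : Perm (Fin n)}
    (hA : IsAscentOn p τ = IsAscentOn p τ')
    (h : descentNormalize hp τ = descentNormalize hp τ') : τ = τ' := by
  have undo : ∀ σ : Perm (Fin n), IsAscentOn p σ = IsAscentOn p τ → ∀ x : Fin n,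
      σ x = descentNormalize hp σ
        ⟨pairSwap (IsAscentOn p τ) x, pairSwap_lt (isAscentOn_succ_lt τ) x.2⟩ := by
    rintro σ hσ x
    rw [descentNormalize_apply]
    congr 1
    ext
    simp only [hσ]
    exact (pairSwap_involutive (isAscentOn_not_succ hp τ) x).symm
  ext x
  rw [undo τ rfl, undo τ' hA.symm, h]

theorem isAscentOn_eq_of_forall_mem_iff {τ τ' : Perm (Fin n)}
    (h : ∀ j ∈ {j ∈ range n | p j}, IsAscentOn p τ j ↔ IsAscentOn p τ' j) :
    IsAscentOn p τ = IsAscentOn p τ' := by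
  funext j
  by_cases hj : j ∈ {j ∈ range n | p j}
  · exact propext (h j hj)
  · have hnot : ∀ σ : Perm (Fin n), ¬ IsAscentOn p σ j := fun _ ⟨hpj, hjn, _⟩ =>
      hj (mem_filter.2 ⟨mem_range.2 (by omega), hpj⟩)
    simp only [hnot]

theorem factorial_le_card_descentsOn_mul_two_pow (hp : ∀ j, p j → ¬ p (j + 1)) :
    n.factorial ≤
      Nat.card {σ : Perm (Fin n) // DescentsOn p σ} * 2 ^ #{j ∈ range n | p j} := by
  let encode (τ : Perm (Fin n)) :
      {σ : Perm (Fin n) // DescentsOn p σ} × ({j // j ∈ {j ∈ range n | p j}} → Bool) :=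
    (⟨descentNormalize hp τ, descentsOn_descentNormalize hp τ⟩,
      fun j => decide (IsAscentOn p τ j))
  have hencode : Injective encode := fun τ τ' h => by
    simp only [encode, Prod.mk.injEq, Subtype.mk.injEq, funext_iff, decide_eq_decide] at h
    exact eq_of_descentNormalize_eq hp
      (isAscentOn_eq_of_forall_mem_iff fun j hj => h.2 ⟨j, hj⟩) h.1
  calc n.factorial = Nat.card (Perm (Fin n)) := by
        simp [Nat.card_eq_fintype_card, Fintype.card_perm]
    _ ≤ _ := Nat.card_le_card_of_injective encode hencode
    _ = _ := by
      rw [Nat.card_prod, Nat.card_fun, Nat.card_eq_fintype_card (α := Bool), Fintype.card_bool,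
        Nat.card_eq_finsetCard]

theorem avoidsConsIncreasing_of_descentsOn_dvd {m : ℕ} (hm : 0 < m) {σ : Perm (Fin n)}
    (hσ : DescentsOn (fun j => m ∣ j + 1) σ) : AvoidsConsIncreasing n (m + 1) σ := by
  rintro ⟨i, hi, hinc⟩
  have hr : i % m < m := Nat.mod_lt i hm
  -- `i + (m - 1 - i % m) + 1` is the least multiple of `m` above `i`
  have hdvd : m ∣ i + (m - 1 - i % m) + 1 :=
    ⟨i / m + 1, by have := Nat.div_add_mod i m; rw [Nat.mul_add]; omega⟩
  exact lt_asymm (hσ _ (by omega) hdvd) (hinc (m - 1 - i % m) (by omega))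

theorem factorial_le_card_avoidsConsIncreasing_mul_two_pow {m : ℕ} (hm : 2 ≤ m) :
    n.factorial ≤
      Nat.card {σ : Perm (Fin n) // AvoidsConsIncreasing n (m + 1) σ} * 2 ^ (n / m) := by
  calc n.factorial
      ≤ Nat.card {σ : Perm (Fin n) // DescentsOn (fun j => m ∣ j + 1) σ} *
          2 ^ #{j ∈ range n | m ∣ j + 1} :=
        factorial_le_card_descentsOn_mul_two_pow fun _ h h' => by
          have := Nat.dvd_one.1 ((Nat.dvd_add_right h).1 h')
          omega
    _ ≤ _ := by
      rw [Nat.card_multiples]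
      gcongr
      exact Nat.card_le_card_of_injective _
        (Subtype.map_injective (fun _ => avoidsConsIncreasing_of_descentsOn_dvd (by omega))
          injective_id)

/-- For every `0 < c < 1` there is a positive integer `k` such that for all sufficiently
large `n`, at least `c ^ n * n!` permutations of `[n]` avoid the consecutive pattern
`1 2 ⋯ k`. -/
theorem many_perms_avoid_consecutive_increasing (c : ℝ) (hc0 : 0 < c) (hc1 : c < 1) :
    ∃ k : ℕ, 0 < k ∧ ∃ N : ℕ, ∀ n : ℕ, N ≤ n →
      c ^ n * (n.factorial : ℝ) ≤
        (Nat.card {σ : Equiv.Perm (Fin n) // AvoidsConsIncreasing n k σ} : ℝ) := by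
  obtain ⟨m₀, hm₀⟩ := exists_pow_lt_of_lt_one (by norm_num : (0 : ℝ) < 1 / 2) hc1
  obtain ⟨m, hm, hcm⟩ : ∃ m, 2 ≤ m ∧ c ^ m ≤ 1 / 2 :=
    ⟨m₀ + 2, by omega, (pow_le_pow_of_le_one hc0.le hc1.le (by omega)).trans hm₀.le⟩
  refine ⟨m + 1, m.succ_pos, 0, fun n _ => ?_⟩
  set A := Nat.card {σ : Perm (Fin n) // AvoidsConsIncreasing n (m + 1) σ}
  have hcount : (n.factorial : ℝ) ≤ A * 2 ^ (n / m) := by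
    exact_mod_cast factorial_le_card_avoidsConsIncreasing_mul_two_pow hm
  have hsmall : c ^ n * 2 ^ (n / m) ≤ 1 :=
    calc c ^ n * 2 ^ (n / m)
        ≤ (c ^ m) ^ (n / m) * 2 ^ (n / m) := by
          rw [← pow_mul]
          exact mul_le_mul_of_nonneg_right
            (pow_le_pow_of_le_one hc0.le hc1.le (Nat.mul_div_le n m)) (by positivity)
      _ ≤ (1 / 2) ^ (n / m) * 2 ^ (n / m) := by gcongr
      _ = 1 := by rw [← mul_pow]; norm_num
  calc c ^ n * (n.factorial : ℝ)
      ≤ c ^ n * (A * 2 ^ (n / m)) := by gcongr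
    _ = A * (c ^ n * 2 ^ (n / m)) := by ring
    _ ≤ A := mul_le_of_le_one_right A.cast_nonneg hsmall
end
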